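/- arXiv:1404.3240 — 10 statements merged into one kernel-verified Lean document; each statement's English description precedes it below -/
import Mathlib

section
/- Let K ⊆ ℝ^d be a closed pointed convex cone (i.e., K ∩ (−K) = {0}) and let V ⊆ ℝ^d be a closed set. Then for every integer r ≥ 1, the set of points A ∈ K that can be written as a sum of at most r elements of K ∩ V is a closed subset of ℝ^d. Equivalently, the atomic rank function rank_{K,V} is lower semicontinuous on K. -/
open Filter Topology Metric Bornology

/-- In a closed pointed cone, each summand is norm-controlled by the sum. -/
lemma cone_bound (d : ℕ) (K : Set (Fin d → ℝ))
    (hKclosed : IsClosed K)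
    (hsmul : ∀ x ∈ K, ∀ c : ℝ, 0 ≤ c → c • x ∈ K)
    (hpointed : K ∩ (-K) = {0}) :
    ∃ c : ℝ, 0 ≤ c ∧ ∀ x ∈ K, ∀ y ∈ K, ‖x‖ ≤ c * ‖x + y‖ := by
  by_contra h
  push_neg at h
  have hex : ∀ n : ℕ, ∃ x ∈ K, ∃ y ∈ K, ‖x‖ > (n + 1 : ℝ) * ‖x + y‖ := by
    intro n
    obtain ⟨x, hx, y, hy, hlt⟩ := h (n + 1 : ℝ) (by positivity)
    exact ⟨x, hx, y, hy, hlt⟩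
  choose x hx y hy hlt using hex
  have hxpos : ∀ n, 0 < ‖x n‖ := by
    intro n
    have h0 : (0:ℝ) ≤ (n + 1 : ℝ) * ‖x n + y n‖ := by positivity
    linarith [hlt n]
  set u : ℕ → (Fin d → ℝ) := fun n => ‖x n‖⁻¹ • x n with hu
  set v : ℕ → (Fin d → ℝ) := fun n => ‖x n‖⁻¹ • y n with hv
  have huK : ∀ n, u n ∈ K := fun n => hsmul _ (hx n) _ (by positivity)
  have hvK : ∀ n, v n ∈ K := fun n => hsmul _ (hy n) _ (by positivity)
  have hunorm : ∀ n, ‖u n‖ = 1 := by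
    intro n
    simp only [hu, norm_smul, norm_inv, norm_norm]
    exact inv_mul_cancel₀ (hxpos n).ne'
  have hsumlt : ∀ n, ‖u n + v n‖ < 1 / (n + 1 : ℝ) := by
    intro n
    have : u n + v n = ‖x n‖⁻¹ • (x n + y n) := by rw [smul_add]
    rw [this, norm_smul, norm_inv, norm_norm]
    rw [inv_mul_lt_iff₀ (hxpos n), mul_one_div, lt_div_iff₀ (by positivity), mul_comm]
    exact hlt n
  have hvnorm : ∀ n, ‖v n‖ ≤ 2 := by
    intro n
    have h1 : ‖v n‖ ≤ ‖u n + v n‖ + ‖u n‖ := by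
      calc ‖v n‖ = ‖(u n + v n) + (- u n)‖ := by congr 1; abel
      _ ≤ ‖u n + v n‖ + ‖-u n‖ := norm_add_le _ _
      _ = ‖u n + v n‖ + ‖u n‖ := by rw [norm_neg]
    have h2 : (1:ℝ) / (n + 1) ≤ 1 := by
      rw [div_le_one (by positivity)]; linarith [Nat.cast_nonneg (α := ℝ) n]
    have := hsumlt n
    rw [hunorm n] at h1
    linarith
  -- extract a convergent subsequence of the pair sequence
  set w : ℕ → (Fin d → ℝ) × (Fin d → ℝ) := fun n => (u n, v n) with hw
  have hwball : ∀ n, w n ∈ closedBall (0 : (Fin d → ℝ) × (Fin d → ℝ)) 2 := by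
    intro n
    rw [mem_closedBall_zero_iff, Prod.norm_def]
    exact max_le (by rw [hunorm n]; norm_num) (hvnorm n)
  obtain ⟨p, hp, φ, hφ, hwt⟩ := (isCompact_closedBall
    (0 : (Fin d → ℝ) × (Fin d → ℝ)) 2).tendsto_subseq hwball
  have hwt' : Tendsto (w ∘ φ) atTop (𝓝 p.1 ×ˢ 𝓝 p.2) := by
    rwa [← nhds_prod_eq, ← Prod.mk.eta (p := p)]
  have hut : Tendsto (u ∘ φ) atTop (𝓝 p.1) := hwt'.fst
  have hvt : Tendsto (v ∘ φ) atTop (𝓝 p.2) := hwt'.snd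
  have hp1K : p.1 ∈ K := hKclosed.mem_of_tendsto hut (Eventually.of_forall fun n => huK _)
  have hp2K : p.2 ∈ K := hKclosed.mem_of_tendsto hvt (Eventually.of_forall fun n => hvK _)
  have hp1norm : ‖p.1‖ = 1 := by
    have h1 : Tendsto (fun n => ‖(u ∘ φ) n‖) atTop (𝓝 ‖p.1‖) := hut.norm
    have h2 : Tendsto (fun n => ‖(u ∘ φ) n‖) atTop (𝓝 1) := by
      simp only [Function.comp, hunorm]; exact tendsto_const_nhds
    exact tendsto_nhds_unique h1 h2
  have hsum0 : p.1 + p.2 = 0 := by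
    have h1 : Tendsto (fun n => (u ∘ φ) n + (v ∘ φ) n) atTop (𝓝 (p.1 + p.2)) := hut.add hvt
    have h2 : Tendsto (fun n => (u ∘ φ) n + (v ∘ φ) n) atTop (𝓝 0) := by
      rw [tendsto_zero_iff_norm_tendsto_zero]
      refine squeeze_zero (g := fun n : ℕ => 1 / (n + 1 : ℝ)) (fun n => norm_nonneg _)
        (fun n => ?_) tendsto_one_div_add_atTop_nhds_zero_nat
      · have h3 := (hsumlt (φ n)).le
        have h4 : (1:ℝ) / (φ n + 1) ≤ 1 / (n + 1) := by
          apply div_le_div_of_nonneg_left (by norm_num) (by positivity)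
          have : n ≤ φ n := hφ.le_apply
          push_cast
          linarith [Nat.cast_le (α := ℝ).mpr this]
        exact h3.trans h4
    exact tendsto_nhds_unique h1 h2
  have : p.1 ∈ K ∩ (-K) := by
    refine ⟨hp1K, ?_⟩
    simp only [Set.mem_neg]
    have : -p.1 = p.2 := by linear_combination -hsum0
    rw [show -p.1 = p.2 from by linear_combination (norm := module) -hsum0]
    exact hp2K
  rw [hpointed] at this
  simp only [Set.mem_singleton_iff] at this
  rw [this] at hp1norm
  simp at hp1norm

/-- For each fixed `k`, the set of sums of exactly `k` elements of `K ∩ V` is closed. -/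
lemma sum_k_closed (d : ℕ) (K V : Set (Fin d → ℝ))
    (hKclosed : IsClosed K)
    (hsmul : ∀ x ∈ K, ∀ c : ℝ, 0 ≤ c → c • x ∈ K)
    (hadd : ∀ x ∈ K, ∀ y ∈ K, x + y ∈ K)
    (hpointed : K ∩ (-K) = {0})
    (hV : IsClosed V) (k : ℕ) :
    IsClosed {A : Fin d → ℝ | ∃ R : Fin k → (Fin d → ℝ),
      (∀ i, R i ∈ K ∩ V) ∧ A = ∑ i, R i} := by
  obtain ⟨c, hc0, hc⟩ := cone_bound d K hKclosed hsmul hpointed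
  set c' := max c 1 with hc'
  have hc'1 : (1:ℝ) ≤ c' := le_max_right _ _
  have hc'c : c ≤ c' := le_max_left _ _
  -- the key bound: each summand is controlled by the total sum
  have hbound : ∀ R : Fin k → (Fin d → ℝ), (∀ i, R i ∈ K) →
      ∀ i, ‖R i‖ ≤ c' * ‖∑ j, R j‖ := by
    intro R hR i
    have h0K : (0 : Fin d → ℝ) ∈ K := by
      have := hsmul _ (hR i) 0 le_rfl
      simpa using this
    have hrest : ∑ j ∈ Finset.univ.erase i, R j ∈ K :=
      Finset.sum_induction R (· ∈ K) (fun a b ha hb => hadd a ha b hb) h0K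
        (fun j _ => hR j)
    have hsplit : ∑ j, R j = R i + ∑ j ∈ Finset.univ.erase i, R j :=
      (Finset.add_sum_erase _ R (Finset.mem_univ i)).symm
    calc ‖R i‖ ≤ c * ‖R i + ∑ j ∈ Finset.univ.erase i, R j‖ :=
          hc _ (hR i) _ hrest
    _ = c * ‖∑ j, R j‖ := by rw [← hsplit]
    _ ≤ c' * ‖∑ j, R j‖ := by
        apply mul_le_mul_of_nonneg_right hc'c (norm_nonneg _)
  apply IsSeqClosed.isClosed
  intro A p hA hAp
  choose R hRmem hRsum using hA
  obtain ⟨M, hM0, hM⟩ : ∃ M : ℝ, 0 ≤ M ∧ ∀ n, ‖A n‖ ≤ M := by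
    obtain ⟨C, hC⟩ := (Metric.isBounded_range_of_tendsto A hAp).subset_closedBall 0
    refine ⟨max C 0, le_max_right _ _, fun n => ?_⟩
    have := hC ⟨n, rfl⟩
    rw [mem_closedBall_zero_iff] at this
    exact this.trans (le_max_left _ _)
  have hRball : ∀ n, R n ∈ closedBall (0 : Fin k → Fin d → ℝ) (c' * M) := by
    intro n
    rw [mem_closedBall_zero_iff]
    rw [pi_norm_le_iff_of_nonneg (by positivity)]
    intro i
    calc ‖R n i‖ ≤ c' * ‖∑ j, R n j‖ := hbound _ (fun j => (hRmem n j).1) i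
    _ = c' * ‖A n‖ := by rw [← hRsum n]
    _ ≤ c' * M := by
        apply mul_le_mul_of_nonneg_left (hM n) (by positivity)
  obtain ⟨L, _, φ, hφ, hLt⟩ := (isCompact_closedBall
    (0 : Fin k → Fin d → ℝ) (c' * M)).tendsto_subseq hRball
  have hLi : ∀ i, Tendsto (fun n => R (φ n) i) atTop (𝓝 (L i)) := by
    intro i
    exact (tendsto_pi_nhds.mp hLt) i
  refine ⟨L, fun i => ?_, ?_⟩
  · exact (hKclosed.inter hV).mem_of_tendsto (hLi i)
      (Eventually.of_forall fun n => hRmem _ i)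
  · have h1 : Tendsto (fun n => ∑ i, R (φ n) i) atTop (𝓝 (∑ i, L i)) :=
      tendsto_finset_sum _ fun i _ => hLi i
    have h2 : Tendsto (fun n => ∑ i, R (φ n) i) atTop (𝓝 p) := by
      have : (fun n => ∑ i, R (φ n) i) = A ∘ φ := by
        funext n; exact (hRsum (φ n)).symm
      rw [this]
      exact hAp.comp hφ.tendsto_atTop
    exact tendsto_nhds_unique h2 h1

/-- For a closed pointed convex cone `K ⊆ ℝ^d` and a closed set `V`,
the set of points of `K` that are sums of at most `r` elements of `K ∩ V` is closed
(equivalently, the atomic rank `rank_{K,V}` is lower semicontinuous on `K`). -/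
theorem stmt1 (d : ℕ) (K V : Set (Fin d → ℝ))
    (hKclosed : IsClosed K)
    (hsmul : ∀ x ∈ K, ∀ c : ℝ, 0 ≤ c → c • x ∈ K)
    (hadd : ∀ x ∈ K, ∀ y ∈ K, x + y ∈ K)
    (hpointed : K ∩ (-K) = {0})
    (hV : IsClosed V) (r : ℕ) (hr : 1 ≤ r) :
    IsClosed {A | A ∈ K ∧ ∃ k ≤ r, ∃ R : Fin k → (Fin d → ℝ),
      (∀ i, R i ∈ K ∩ V) ∧ A = ∑ i, R i} := by
  have heq : {A | A ∈ K ∧ ∃ k ≤ r, ∃ R : Fin k → (Fin d → ℝ),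
      (∀ i, R i ∈ K ∩ V) ∧ A = ∑ i, R i} =
      K ∩ ⋃ k ∈ Finset.range (r + 1), {A : Fin d → ℝ | ∃ R : Fin k → (Fin d → ℝ),
        (∀ i, R i ∈ K ∩ V) ∧ A = ∑ i, R i} := by
    ext A
    simp only [Set.mem_setOf_eq, Set.mem_inter_iff, Set.mem_iUnion, Finset.mem_range]
    constructor
    · rintro ⟨hAK, k, hk, R, hR⟩
      exact ⟨hAK, k, Nat.lt_succ_of_le hk, R, hR⟩
    · rintro ⟨hAK, k, hk, R, hR⟩
      exact ⟨hAK, k, Nat.lt_succ_iff.mp hk, R, hR⟩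
  rw [heq]
  apply hKclosed.inter
  apply Set.Finite.isClosed_biUnion (Finset.finite_toSet _)
  intro k _
  exact sum_k_closed d K V hKclosed hsmul hadd hpointed hV k
end

section
/- Let A be an entrywise nonnegative m×n real matrix, and let D₁ be an m×m diagonal matrix and D₂ an n×n diagonal matrix, both with strictly positive diagonal entries. Then τ₊(D₁ A D₂) = τ₊(A). -/
open Matrix

/-- The set of atoms `𝒜₊(A)`: rank-at-most-one matrices `R` with `0 ≤ R ≤ A` entrywise. -/
noncomputable def Aplus {m n : Type*} [Fintype m] [Fintype n]
    (A : Matrix m n ℝ) : Set (Matrix m n ℝ) :=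
  {R | R.rank ≤ 1 ∧ ∀ i j, 0 ≤ R i j ∧ R i j ≤ A i j}

/-- `τ₊(A)`: supremum of `L(A)` over linear functionals `L` with `L ≤ 1` on `𝒜₊(A)`. -/
noncomputable def tauPlus {m n : Type*} [Fintype m] [Fintype n]
    (A : Matrix m n ℝ) : ℝ :=
  sSup {x | ∃ L : Matrix m n ℝ →ₗ[ℝ] ℝ, (∀ R ∈ Aplus A, L R ≤ 1) ∧ L A = x}

/-- Two-sided diagonal scaling as a linear map on matrices. -/
noncomputable def scaleLM {m n : ℕ} (d₁ : Fin m → ℝ) (d₂ : Fin n → ℝ) :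
    Matrix (Fin m) (Fin n) ℝ →ₗ[ℝ] Matrix (Fin m) (Fin n) ℝ where
  toFun X := Matrix.diagonal d₁ * X * Matrix.diagonal d₂
  map_add' X Y := by simp [Matrix.mul_add, Matrix.add_mul]
  map_smul' c X := by simp [Matrix.mul_smul, Matrix.smul_mul]

lemma scaleLM_apply {m n : ℕ} (d₁ : Fin m → ℝ) (d₂ : Fin n → ℝ)
    (X : Matrix (Fin m) (Fin n) ℝ) (i : Fin m) (j : Fin n) :
    scaleLM d₁ d₂ X i j = d₁ i * X i j * d₂ j := by
  simp [scaleLM, Matrix.mul_diagonal, Matrix.diagonal_mul]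

lemma scale_mem_Aplus {m n : ℕ} (A : Matrix (Fin m) (Fin n) ℝ)
    (d₁ : Fin m → ℝ) (d₂ : Fin n → ℝ) (hd₁ : ∀ i, 0 ≤ d₁ i) (hd₂ : ∀ j, 0 ≤ d₂ j)
    {R : Matrix (Fin m) (Fin n) ℝ} (hR : R ∈ Aplus A) :
    scaleLM d₁ d₂ R ∈ Aplus (scaleLM d₁ d₂ A) := by
  obtain ⟨hrank, hle⟩ := hR
  refine ⟨?_, fun i j => ?_⟩
  · calc (Matrix.diagonal d₁ * R * Matrix.diagonal d₂).rank
        ≤ (Matrix.diagonal d₁ * R).rank := Matrix.rank_mul_le_left _ _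
      _ ≤ R.rank := Matrix.rank_mul_le_right _ _
      _ ≤ 1 := hrank
  · rw [scaleLM_apply, scaleLM_apply]
    constructor
    · exact mul_nonneg (mul_nonneg (hd₁ i) (hle i j).1) (hd₂ j)
    · exact mul_le_mul_of_nonneg_right
        (mul_le_mul_of_nonneg_left (hle i j).2 (hd₁ i)) (hd₂ j)

lemma scaleLM_inv {m n : ℕ} (d₁ : Fin m → ℝ) (d₂ : Fin n → ℝ)
    (hd₁ : ∀ i, d₁ i ≠ 0) (hd₂ : ∀ j, d₂ j ≠ 0) (X : Matrix (Fin m) (Fin n) ℝ) :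
    scaleLM (fun i => (d₁ i)⁻¹) (fun j => (d₂ j)⁻¹) (scaleLM d₁ d₂ X) = X := by
  ext i j
  rw [scaleLM_apply, scaleLM_apply]
  have h : (d₁ i)⁻¹ * (d₁ i * X i j * d₂ j) * (d₂ j)⁻¹
      = ((d₁ i)⁻¹ * d₁ i) * X i j * (d₂ j * (d₂ j)⁻¹) := by ring
  rw [h, inv_mul_cancel₀ (hd₁ i), mul_inv_cancel₀ (hd₂ j), one_mul, mul_one]

/-- `τ₊` is invariant under diagonal scaling with strictly positive
diagonal matrices: `τ₊(D₁ A D₂) = τ₊(A)`. -/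
theorem stmt4 {m n : ℕ} (A : Matrix (Fin m) (Fin n) ℝ) (hA : ∀ i j, 0 ≤ A i j)
    (d₁ : Fin m → ℝ) (d₂ : Fin n → ℝ) (hd₁ : ∀ i, 0 < d₁ i) (hd₂ : ∀ j, 0 < d₂ j) :
    tauPlus (Matrix.diagonal d₁ * A * Matrix.diagonal d₂) = tauPlus A := by
  have hd₁' : ∀ i, d₁ i ≠ 0 := fun i => (hd₁ i).ne'
  have hd₂' : ∀ j, d₂ j ≠ 0 := fun j => (hd₂ j).ne'
  have key : Matrix.diagonal d₁ * A * Matrix.diagonal d₂ = scaleLM d₁ d₂ A := rfl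
  have hinvA : scaleLM (fun i => (d₁ i)⁻¹) (fun j => (d₂ j)⁻¹) (scaleLM d₁ d₂ A) = A :=
    scaleLM_inv d₁ d₂ hd₁' hd₂' A
  unfold tauPlus
  rw [key]
  congr 1
  ext x
  constructor
  · rintro ⟨L, hL, rfl⟩
    refine ⟨L.comp (scaleLM d₁ d₂), fun R hR => ?_, rfl⟩
    exact hL _ (scale_mem_Aplus A d₁ d₂ (fun i => (hd₁ i).le) (fun j => (hd₂ j).le) hR)
  · rintro ⟨L, hL, rfl⟩
    refine ⟨L.comp (scaleLM (fun i => (d₁ i)⁻¹) (fun j => (d₂ j)⁻¹)), fun R hR => ?_, ?_⟩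
    · apply hL
      have := scale_mem_Aplus (scaleLM d₁ d₂ A) (fun i => (d₁ i)⁻¹) (fun j => (d₂ j)⁻¹)
        (fun i => (inv_nonneg.mpr (hd₁ i).le)) (fun j => (inv_nonneg.mpr (hd₂ j).le)) hR
      rwa [hinvA] at this
    · simp [hinvA]
end

section
/- Let A and B be entrywise nonnegative m×n real matrices. Then τ₊(A + B) ≤ τ₊(A) + τ₊(B). -/
open Matrix

/-! A functional `L` feasible for `A` is bounded on `A` by the number of entries, since `A` is
the sum of its entries placed in single-entry matrices, each of which is an atom. The feasible
sets only shrink as `A` grows, so a functional feasible for `A + B` is feasible for both `A`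
and `B`, and `L (A + B) = L A + L B ≤ τ₊(A) + τ₊(B)`. -/

namespace Aplus

variable {m n : Type*} [Fintype m] [Fintype n]

theorem mono {A A' : Matrix m n ℝ} (h : ∀ i j, A i j ≤ A' i j) : Aplus A ⊆ Aplus A' :=
  fun _ ⟨hrank, hR⟩ => ⟨hrank, fun i j => ⟨(hR i j).1, (hR i j).2.trans (h i j)⟩⟩

theorem single_mem [DecidableEq m] [DecidableEq n] {A : Matrix m n ℝ}
    (hA : ∀ i j, 0 ≤ A i j) (i : m) (j : n) : single i j (A i j) ∈ Aplus A := by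
  have hvec : single i j (A i j) = vecMulVec (Pi.single i (A i j)) (Pi.single j 1) := by
    ext a b
    by_cases ha : i = a <;> by_cases hb : j = b <;> simp [vecMulVec_apply, ha, hb]
  refine ⟨hvec ▸ rank_vecMulVec_le _ _, fun a b => ?_⟩
  by_cases hab : i = a ∧ j = b
  · obtain ⟨rfl, rfl⟩ := hab
    simpa using hA i j
  · simpa [single_apply_of_ne _ _ _ _ _ hab] using hA a b

end Aplus

section tauPlus

variable {m n : Type*} [Fintype m] [Fintype n]

theorem apply_le_card_mul_card_of_le_one_on_Aplus {A : Matrix m n ℝ} (hA : ∀ i j, 0 ≤ A i j)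
    {L : Matrix m n ℝ →ₗ[ℝ] ℝ} (hL : ∀ R ∈ Aplus A, L R ≤ 1) :
    L A ≤ Fintype.card m * Fintype.card n := by
  classical
  calc L A = ∑ i, ∑ j, L (single i j (A i j)) := by
        conv_lhs => rw [matrix_eq_sum_single A]
        simp only [map_sum]
    _ ≤ ∑ _i : m, ∑ _j : n, (1 : ℝ) :=
        Finset.sum_le_sum fun i _ => Finset.sum_le_sum fun j _ =>
          hL _ (Aplus.single_mem hA i j)
    _ = Fintype.card m * Fintype.card n := by simp

theorem le_tauPlus {A : Matrix m n ℝ} (hA : ∀ i j, 0 ≤ A i j)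
    {L : Matrix m n ℝ →ₗ[ℝ] ℝ} (hL : ∀ R ∈ Aplus A, L R ≤ 1) : L A ≤ tauPlus A :=
  le_csSup ⟨_, fun _ ⟨_, hL', hx⟩ => hx ▸ apply_le_card_mul_card_of_le_one_on_Aplus hA hL'⟩
    ⟨L, hL, rfl⟩

end tauPlus

/-- subadditivity of `τ₊`: `τ₊(A + B) ≤ τ₊(A) + τ₊(B)`. -/
theorem stmt6 {m n : ℕ} (A B : Matrix (Fin m) (Fin n) ℝ)
    (hA : ∀ i j, 0 ≤ A i j) (hB : ∀ i j, 0 ≤ B i j) :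
    tauPlus (A + B) ≤ tauPlus A + tauPlus B := by
  refine csSup_le ⟨0, 0, fun _ _ => zero_le_one, rfl⟩ ?_
  rintro _ ⟨L, hL, rfl⟩
  have hLA : ∀ R ∈ Aplus A, L R ≤ 1 := fun R hR =>
    hL R (Aplus.mono (fun i j => le_add_of_nonneg_right (hB i j)) hR)
  have hLB : ∀ R ∈ Aplus B, L R ≤ 1 := fun R hR =>
    hL R (Aplus.mono (fun i j => le_add_of_nonneg_left (hA i j)) hR)
  rw [map_add]
  exact add_le_add (le_tauPlus hA hLA) (le_tauPlus hB hLB)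
end

section
/- Let A be an entrywise nonnegative m×n real matrix and B an entrywise nonnegative n×p real matrix. Then τ₊(AB) ≤ min(τ₊(A), τ₊(B)). -/
open Matrix

/-!
A linear map `T` with `T A = A'` that sends atoms of `A` to atoms of `A'` pulls every functional
feasible for `A'` back to one feasible for `A` with the same value, so `τ₊(A') ≤ τ₊(A)`.
Right multiplication by `B ≥ 0` and left multiplication by `A ≥ 0` are such maps for `A ↦ AB`
and `B ↦ AB`, since they preserve rank `≤ 1` and entrywise bounds. The supremum defining `τ₊(A)`
is finite because `A` is a sum of its `mn` single-entry matrices, each an atom.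
-/

section TauPlus

variable {m n m' n' p : Type*} [Fintype m] [Fintype n] [Fintype m'] [Fintype n'] [Fintype p]

def tauPlusValues (A : Matrix m n ℝ) : Set ℝ :=
  {x | ∃ L : Matrix m n ℝ →ₗ[ℝ] ℝ, (∀ R ∈ Aplus A, L R ≤ 1) ∧ L A = x}

theorem zero_mem_tauPlusValues (A : Matrix m n ℝ) : (0 : ℝ) ∈ tauPlusValues A :=
  ⟨0, fun _ _ => zero_le_one, rfl⟩

theorem single_mem_Aplus [DecidableEq m] [DecidableEq n] {A : Matrix m n ℝ}
    (hA : ∀ i j, 0 ≤ A i j) (i : m) (j : n) : single i j (A i j) ∈ Aplus A := by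
  refine ⟨?_, fun k l => ?_⟩
  · have hvec : single i j (A i j) = vecMulVec (Pi.single i (A i j)) (Pi.single j 1) := by
      ext k l
      simp only [single_apply, vecMulVec_apply, Pi.single_apply]
      by_cases hk : i = k <;> by_cases hl : j = l <;> simp [hk, hl, eq_comm]
    rw [hvec]
    exact rank_vecMulVec_le _ _
  · by_cases hkl : i = k ∧ j = l
    · obtain ⟨rfl, rfl⟩ := hkl
      simp [hA]
    · simp [hkl, hA k l]

theorem le_card_mul_card_of_forall_Aplus_le_one [DecidableEq m] [DecidableEq n]
    {A : Matrix m n ℝ} (hA : ∀ i j, 0 ≤ A i j) {L : Matrix m n ℝ →ₗ[ℝ] ℝ}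
    (hL : ∀ R ∈ Aplus A, L R ≤ 1) : L A ≤ Fintype.card m * Fintype.card n := by
  calc L A = ∑ i : m, ∑ j : n, L (single i j (A i j)) := by
        conv_lhs => rw [matrix_eq_sum_single A]
        simp only [map_sum]
    _ ≤ ∑ _i : m, ∑ _j : n, (1 : ℝ) :=
        Finset.sum_le_sum fun i _ => Finset.sum_le_sum fun j _ => hL _ (single_mem_Aplus hA i j)
    _ = Fintype.card m * Fintype.card n := by simp

theorem bddAbove_tauPlusValues {A : Matrix m n ℝ} (hA : ∀ i j, 0 ≤ A i j) :
    BddAbove (tauPlusValues A) := by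
  classical
  exact ⟨_, by rintro _ ⟨L, hL, rfl⟩; exact le_card_mul_card_of_forall_Aplus_le_one hA hL⟩

theorem tauPlus_le_of_mapsTo {A : Matrix m n ℝ} {A' : Matrix m' n' ℝ} (hA : ∀ i j, 0 ≤ A i j)
    (T : Matrix m n ℝ →ₗ[ℝ] Matrix m' n' ℝ) (hT : Set.MapsTo T (Aplus A) (Aplus A'))
    (hTA : T A = A') : tauPlus A' ≤ tauPlus A := by
  refine csSup_le_csSup (bddAbove_tauPlusValues hA) ⟨0, zero_mem_tauPlusValues A'⟩ ?_
  rintro _ ⟨L, hL, rfl⟩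
  exact ⟨L ∘ₗ T, fun R hR => hL _ (hT hR), by rw [LinearMap.comp_apply, hTA]⟩

theorem mapsTo_mul_right_Aplus {A : Matrix m n ℝ} {B : Matrix n p ℝ} (hB : ∀ i j, 0 ≤ B i j) :
    Set.MapsTo (· * B) (Aplus A) (Aplus (A * B)) := by
  rintro R ⟨hrank, hR⟩
  refine ⟨(rank_mul_le_left R B).trans hrank, fun i j => ⟨?_, ?_⟩⟩
  · exact Finset.sum_nonneg fun k _ => mul_nonneg (hR i k).1 (hB k j)
  · exact Finset.sum_le_sum fun k _ => mul_le_mul_of_nonneg_right (hR i k).2 (hB k j)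

theorem mapsTo_mul_left_Aplus {A : Matrix m n ℝ} {B : Matrix n p ℝ} (hA : ∀ i j, 0 ≤ A i j) :
    Set.MapsTo (A * ·) (Aplus B) (Aplus (A * B)) := by
  rintro R ⟨hrank, hR⟩
  refine ⟨(rank_mul_le_right A R).trans hrank, fun i j => ⟨?_, ?_⟩⟩
  · exact Finset.sum_nonneg fun k _ => mul_nonneg (hA i k) (hR k j).1
  · exact Finset.sum_le_sum fun k _ => mul_le_mul_of_nonneg_left (hR k j).2 (hA i k)

end TauPlus

/-- product property: `τ₊(AB) ≤ min(τ₊(A), τ₊(B))`. -/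
theorem stmt7 {m n p : ℕ} (A : Matrix (Fin m) (Fin n) ℝ) (B : Matrix (Fin n) (Fin p) ℝ)
    (hA : ∀ i j, 0 ≤ A i j) (hB : ∀ i j, 0 ≤ B i j) :
    tauPlus (A * B) ≤ min (tauPlus A) (tauPlus B) :=
  le_min
    (tauPlus_le_of_mapsTo hA (mulRightLinearMap _ ℝ B) (mapsTo_mul_right_Aplus hB) rfl)
    (tauPlus_le_of_mapsTo hB (mulLeftLinearMap _ ℝ A) (mapsTo_mul_left_Aplus hA) rfl)
end

section
/- Let A be an entrywise nonnegative m×n real matrix and let B = A[I,J] be the submatrix of A obtained by keeping the rows indexed by a subset I ⊆ {1,…,m} and the columns indexed by a subset J ⊆ {1,…,n}. Then τ₊(B) ≤ τ₊(A). -/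
open Matrix

set_option maxHeartbeats 1000000 in
lemma rank_submatrix_le'' {l o m n : Type*} [Fintype l] [Fintype o] [Fintype m] [Fintype n]
    [DecidableEq m] [DecidableEq n]
    (f : l → m) (g : o → n) (A : Matrix m n ℝ) :
    (A.submatrix f g).rank ≤ A.rank := by
  have h : A.submatrix f g =
      ((1 : Matrix m m ℝ).submatrix f id) * A * ((1 : Matrix n n ℝ).submatrix id g) := by
    ext i j
    simp [Matrix.mul_apply, Matrix.one_apply, Finset.sum_ite_eq, Finset.sum_ite_eq',
      ite_mul, mul_ite]
  rw [h, Matrix.mul_assoc]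
  exact le_trans (Matrix.rank_mul_le_right _ _) (Matrix.rank_mul_le_left _ _)

lemma rank_std_le {m n : Type*} [Fintype m] [Fintype n] [DecidableEq m] [DecidableEq n]
    (i : m) (j : n) (c : ℝ) : (Matrix.single i j c).rank ≤ 1 := by
  have h : Matrix.single i j c =
      Matrix.replicateCol (Fin 1) (Pi.single i c) * Matrix.replicateRow (Fin 1) (Pi.single j (1:ℝ)) := by
    ext k l
    by_cases hk : k = i <;> by_cases hl : l = j <;>
      simp [hk, hl, Matrix.mul_apply, Matrix.single, Pi.single_apply,
        Matrix.replicateCol, Matrix.replicateRow, eq_comm]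
    all_goals split_ifs <;> simp_all
  rw [h]
  exact le_trans (Matrix.rank_mul_le_right _ _)
    (le_trans (Matrix.rank_le_card_height _) (by simp))

lemma std_mem_Aplus {m n : Type*} [Fintype m] [Fintype n] [DecidableEq m] [DecidableEq n]
    (A : Matrix m n ℝ) (hA : ∀ i j, 0 ≤ A i j) (i : m) (j : n) :
    Matrix.single i j (A i j) ∈ Aplus A := by
  refine ⟨rank_std_le i j _, fun i' j' => ?_⟩
  simp only [Matrix.single, Matrix.of_apply]
  split_ifs with h
  · obtain ⟨h1, h2⟩ := h; subst h1; subst h2; exact ⟨hA i j, le_refl _⟩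
  · exact ⟨le_refl _, hA i' j'⟩

lemma tauPlus_bddAbove {m n : Type*} [Fintype m] [Fintype n] [DecidableEq m] [DecidableEq n]
    (A : Matrix m n ℝ) (hA : ∀ i j, 0 ≤ A i j) :
    BddAbove {x | ∃ L : Matrix m n ℝ →ₗ[ℝ] ℝ, (∀ R ∈ Aplus A, L R ≤ 1) ∧ L A = x} := by
  refine ⟨(Fintype.card m : ℝ) * (Fintype.card n : ℝ), ?_⟩
  rintro x ⟨L, hL, rfl⟩
  have hdecomp : A = ∑ i : m, ∑ j : n, Matrix.single i j (A i j) :=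
    Matrix.matrix_eq_sum_single A
  calc L A = ∑ i : m, ∑ j : n, L (Matrix.single i j (A i j)) := by
        conv_lhs => rw [hdecomp]
        simp [map_sum]
    _ ≤ ∑ _i : m, ∑ _j : n, (1 : ℝ) := by
        refine Finset.sum_le_sum fun i _ => Finset.sum_le_sum fun j _ => ?_
        exact hL _ (std_mem_Aplus A hA i j)
    _ = (Fintype.card m : ℝ) * (Fintype.card n : ℝ) := by simp [mul_comm]

/-- monotonicity: if `B = A[I,J]` is a submatrix of `A`,
then `τ₊(B) ≤ τ₊(A)`. -/
theorem stmt8 {m n : ℕ} (A : Matrix (Fin m) (Fin n) ℝ) (hA : ∀ i j, 0 ≤ A i j)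
    (I : Finset (Fin m)) (J : Finset (Fin n)) :
    tauPlus (A.submatrix (fun i : I => (i : Fin m)) (fun j : J => (j : Fin n))) ≤
      tauPlus A := by
  set f : I → Fin m := fun i => (i : Fin m)
  set g : J → Fin n := fun j => (j : Fin n)
  set B := A.submatrix f g with hB
  -- the submatrix operation as a linear map
  let S : Matrix (Fin m) (Fin n) ℝ →ₗ[ℝ] Matrix I J ℝ :=
    { toFun := fun M => M.submatrix f g
      map_add' := fun M N => rfl
      map_smul' := fun c M => rfl }
  apply csSup_le_csSup (tauPlus_bddAbove A hA)
  · exact ⟨0, 0, fun R _ => by norm_num, by simp⟩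
  · rintro x ⟨L, hL, rfl⟩
    refine ⟨L.comp S, fun R hR => ?_, rfl⟩
    apply hL
    refine ⟨le_trans (rank_submatrix_le'' f g R) hR.1, fun i j => hR.2 (f i) (g j)⟩
end

section
/- Let N be a monotone positively homogeneous function on nonnegative m×n matrices, and let A be an entrywise nonnegative m×n matrix with N(A) > 0. Then for every linear functional L on ℝ^{m×n} satisfying L(X) ≤ 1 for all entrywise nonnegative X of rank at most 1 with N(X) ≤ 1, one has L(A) ≤ rank₊(A)·N(A). In particular rank₊(A) ≥ N*(A)/N(A), where N*(A) is the supremum of L(A) over all such L. -/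
open Matrix

/-- `rank₊(A)`: the smallest `r` such that `A` is a sum of `r` entrywise-nonnegative
matrices of rank at most one. -/
noncomputable def rankPlus {m n : Type*} [Fintype m] [Fintype n]
    (A : Matrix m n ℝ) : ℕ :=
  sInf {r | ∃ R : Fin r → Matrix m n ℝ,
    (∀ i, (R i).rank ≤ 1 ∧ ∀ k l, 0 ≤ R i k l) ∧ A = ∑ i, R i}

/-! Write `A = ∑ R i` with `rank₊(A)` nonnegative rank-one terms `R i`. Each `R i ≤ A`, so by
monotonicity and homogeneity `R i / N(A)` is admissible for `L`, whence `L(R i) ≤ N(A)`; summing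
gives `L(A) ≤ rank₊(A) · N(A)`. The bound on `N*(A)` is its supremum form. -/

lemma sum_vecMulVec_single_row {m n : Type*} [Fintype m] [DecidableEq m] (A : Matrix m n ℝ) :
    ∑ i, vecMulVec (Pi.single i 1) (A i) = A := by
  ext k l
  simp [Matrix.sum_apply, vecMulVec_apply, Pi.single_apply]

/-- The rows of `A` give a decomposition with `card m` terms, so the `sInf` defining `rank₊(A)`
is over a nonempty set and is attained. -/
lemma exists_rankPlus_decomposition {m n : Type*} [Fintype m] [Fintype n] {A : Matrix m n ℝ}
    (hA : ∀ i j, 0 ≤ A i j) :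
    ∃ R : Fin (rankPlus A) → Matrix m n ℝ,
      (∀ i, (R i).rank ≤ 1 ∧ ∀ k l, 0 ≤ R i k l) ∧ A = ∑ i, R i := by
  classical
  let e := (Fintype.equivFin m).symm
  refine Nat.sInf_mem (s := {r | ∃ R : Fin r → Matrix m n ℝ,
      (∀ i, (R i).rank ≤ 1 ∧ ∀ k l, 0 ≤ R i k l) ∧ A = ∑ i, R i})
    ⟨_, fun i => vecMulVec (Pi.single (e i) 1) (A (e i)),
      fun i => ⟨rank_vecMulVec_le _ _, fun k l => ?_⟩, ?_⟩
  · exact mul_nonneg ((Pi.single_nonneg.2 zero_le_one : (0 : m → ℝ) ≤ Pi.single _ 1) k) (hA _ _)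
  · rw [Equiv.sum_comp e (fun k => vecMulVec (Pi.single k 1) (A k)), sum_vecMulVec_single_row]

lemma apply_le_of_rank_le_one {m n : Type*} [Fintype n] {N : Matrix m n ℝ → ℝ}
    {L : Matrix m n ℝ →ₗ[ℝ] ℝ}
    (hhom : ∀ A : Matrix m n ℝ, (∀ i j, 0 ≤ A i j) → ∀ c : ℝ, 0 ≤ c → N (c • A) = c * N A)
    (hL : ∀ X : Matrix m n ℝ, (∀ i j, 0 ≤ X i j) → X.rank ≤ 1 → N X ≤ 1 → L X ≤ 1)
    {X : Matrix m n ℝ} (hX : ∀ i j, 0 ≤ X i j) (hXrank : X.rank ≤ 1) {c : ℝ} (hc : 0 < c)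
    (hNX : N X ≤ c) : L X ≤ c := by
  have hscaled : L (c⁻¹ • X) ≤ 1 := by
    refine hL _ (fun i j => mul_nonneg (inv_nonneg.2 hc.le) (hX i j)) ?_ ?_
    · rwa [rank_smul_of_mem_nonZeroDivisors _
        (mem_nonZeroDivisors_of_ne_zero (inv_ne_zero hc.ne'))]
    · rwa [hhom X hX _ (inv_nonneg.2 hc.le), inv_mul_le_iff₀ hc, mul_one]
  rwa [map_smul, smul_eq_mul, inv_mul_le_iff₀ hc, mul_one] at hscaled

theorem apply_le_rankPlus_mul {m n : Type*} [Fintype m] [Fintype n] {N : Matrix m n ℝ → ℝ}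
    {L : Matrix m n ℝ →ₗ[ℝ] ℝ}
    (hhom : ∀ A : Matrix m n ℝ, (∀ i j, 0 ≤ A i j) → ∀ c : ℝ, 0 ≤ c → N (c • A) = c * N A)
    (hmono : ∀ A B : Matrix m n ℝ, (∀ i j, 0 ≤ A i j) →
      (∀ i j, 0 ≤ B i j) → (∀ i j, A i j ≤ B i j) → N A ≤ N B)
    (hL : ∀ X : Matrix m n ℝ, (∀ i j, 0 ≤ X i j) → X.rank ≤ 1 → N X ≤ 1 → L X ≤ 1)
    {A : Matrix m n ℝ} (hA : ∀ i j, 0 ≤ A i j) (hNA : 0 < N A) :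
    L A ≤ rankPlus A * N A := by
  obtain ⟨R, hR, hsum⟩ := exists_rankPlus_decomposition hA
  have hR_le : ∀ i k l, R i k l ≤ A k l := fun i k l => by
    rw [hsum, Matrix.sum_apply]
    exact Finset.single_le_sum (fun j _ => (hR j).2 k l) (Finset.mem_univ i)
  have hterm : ∀ i, L (R i) ≤ N A := fun i =>
    apply_le_of_rank_le_one hhom hL (hR i).2 (hR i).1 hNA (hmono _ _ (hR i).2 hA (hR_le i))
  calc L A = ∑ i, L (R i) := (congrArg L hsum).trans (map_sum L R _)
    _ ≤ ∑ _i : Fin (rankPlus A), N A := Finset.sum_le_sum fun i _ => hterm i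
    _ = rankPlus A * N A := by
      rw [Finset.sum_const, Finset.card_univ, Fintype.card_fin, nsmul_eq_mul]

theorem stmt11_general {m n : ℕ} (N : Matrix (Fin m) (Fin n) ℝ → ℝ)
    (hhom : ∀ A : Matrix (Fin m) (Fin n) ℝ, (∀ i j, 0 ≤ A i j) →
      ∀ c : ℝ, 0 ≤ c → N (c • A) = c * N A)
    (hmono : ∀ A B : Matrix (Fin m) (Fin n) ℝ, (∀ i j, 0 ≤ A i j) →
      (∀ i j, 0 ≤ B i j) → (∀ i j, A i j ≤ B i j) → N A ≤ N B)
    (A : Matrix (Fin m) (Fin n) ℝ) (hA : ∀ i j, 0 ≤ A i j) (hNA : 0 < N A) :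
    (∀ L : Matrix (Fin m) (Fin n) ℝ →ₗ[ℝ] ℝ,
      (∀ X : Matrix (Fin m) (Fin n) ℝ,
        (∀ i j, 0 ≤ X i j) → X.rank ≤ 1 → N X ≤ 1 → L X ≤ 1) →
      L A ≤ (rankPlus A : ℝ) * N A) ∧
    (sSup {x : ℝ | ∃ L : Matrix (Fin m) (Fin n) ℝ →ₗ[ℝ] ℝ,
        (∀ X : Matrix (Fin m) (Fin n) ℝ,
          (∀ i j, 0 ≤ X i j) → X.rank ≤ 1 → N X ≤ 1 → L X ≤ 1) ∧ L A = x}) / N A ≤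
      (rankPlus A : ℝ) := by
  refine ⟨fun L hL => apply_le_rankPlus_mul hhom hmono hL hA hNA, ?_⟩
  rw [div_le_iff₀ hNA]
  refine csSup_le ⟨0, 0, fun X _ _ _ => zero_le_one, LinearMap.zero_apply _⟩ ?_
  rintro x ⟨L, hL, rfl⟩
  exact apply_le_rankPlus_mul hhom hmono hL hA hNA

/-- for a monotone positively homogeneous `N` with `N(A) > 0`, every
linear functional `L` with `L ≤ 1` on nonnegative rank-one matrices of `N`-value at
most `1` satisfies `L(A) ≤ rank₊(A) · N(A)`; in particular `N*(A)/N(A) ≤ rank₊(A)`. -/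
theorem stmt11 {m n : ℕ} (N : Matrix (Fin m) (Fin n) ℝ → ℝ)
    (hN0 : ∀ A : Matrix (Fin m) (Fin n) ℝ, (∀ i j, 0 ≤ A i j) → 0 ≤ N A)
    (hhom : ∀ A : Matrix (Fin m) (Fin n) ℝ, (∀ i j, 0 ≤ A i j) →
      ∀ c : ℝ, 0 ≤ c → N (c • A) = c * N A)
    (hmono : ∀ A B : Matrix (Fin m) (Fin n) ℝ, (∀ i j, 0 ≤ A i j) →
      (∀ i j, 0 ≤ B i j) → (∀ i j, A i j ≤ B i j) → N A ≤ N B)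
    (A : Matrix (Fin m) (Fin n) ℝ) (hA : ∀ i j, 0 ≤ A i j) (hNA : 0 < N A) :
    (∀ L : Matrix (Fin m) (Fin n) ℝ →ₗ[ℝ] ℝ,
      (∀ X : Matrix (Fin m) (Fin n) ℝ,
        (∀ i j, 0 ≤ X i j) → X.rank ≤ 1 → N X ≤ 1 → L X ≤ 1) →
      L A ≤ (rankPlus A : ℝ) * N A) ∧
    (sSup {x : ℝ | ∃ L : Matrix (Fin m) (Fin n) ℝ →ₗ[ℝ] ℝ,
        (∀ X : Matrix (Fin m) (Fin n) ℝ,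
          (∀ i j, 0 ≤ X i j) → X.rank ≤ 1 → N X ≤ 1 → L X ≤ 1) ∧ L A = x}) / N A ≤
      (rankPlus A : ℝ) :=
  stmt11_general N hhom hmono A hA hNA
end

section
/- Let e ∈ [0,1] and let a, b, c, d be real numbers with 0 ≤ a ≤ 1, 0 ≤ b ≤ 1, 0 ≤ c ≤ 1, 0 ≤ d ≤ e, and ad = bc. Then b + c − e·a ≤ 1. -/
/-- for `e ∈ [0,1]` and `0 ≤ a,b,c ≤ 1`, `0 ≤ d ≤ e` with `ad = bc`,
one has `b + c − e·a ≤ 1`. -/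
theorem stmt14 (e a b c d : ℝ) (he0 : 0 ≤ e) (he1 : e ≤ 1)
    (ha0 : 0 ≤ a) (ha1 : a ≤ 1) (hb0 : 0 ≤ b) (hb1 : b ≤ 1)
    (hc0 : 0 ≤ c) (hc1 : c ≤ 1) (hd0 : 0 ≤ d) (hde : d ≤ e)
    (hrank : a * d = b * c) :
    b + c - e * a ≤ 1 := by
  nlinarith [mul_nonneg (sub_nonneg.2 hb1) (sub_nonneg.2 hc1), mul_nonneg ha0 (sub_nonneg.2 hde)]
end

section
/- Let A be an n×n real symmetric positive semidefinite matrix, let vec(A) ∈ ℝ^{n²} be its vectorization and A ⊗ A its Kronecker product with itself (an n²×n² matrix). Then rank(A) = min { t ≥ 0 : t·(A ⊗ A) − vec(A)vec(A)^T is positive semidefinite }. -/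
/-!
Conjugating by `U ⊗ U`, where `U` is an orthogonal eigenbasis of `A`, reduces the claim to
`A = diagonal d` with `d ≥ 0`. There the quadratic form of `t • (A ⊗ A) - vec A vec Aᵀ` at `x` is
`t ∑ dᵢ dⱼ xᵢⱼ² - (∑ dₖ xₖₖ)²`. Cauchy–Schwarz over the support of `d`, whose size `r` is the
rank, makes it nonnegative for `t ≥ r`; conversely, at `x = vec (diagonal d⁻¹)`, the
pseudo-inverse, it equals `t r - r²`, which forces `t ≥ r`.
-/

open Matrix Kronecker Finset

variable {m : Type*} [Fintype m]

theorem sum_mul_inv_self_eq_card (d : m → ℝ) :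
    ∑ k, d k * (d k)⁻¹ = Fintype.card {k // d k ≠ 0} := by
  rw [Fintype.card_subtype, card_filter, Nat.cast_sum]
  refine sum_congr rfl fun k _ => ?_
  by_cases hk : d k = 0 <;> simp [hk]

theorem sq_sum_mul_le_card_mul_sum {d : m → ℝ} (hd : ∀ k, 0 ≤ d k) (x : m × m → ℝ) :
    (∑ k, d k * x (k, k)) ^ 2
      ≤ Fintype.card {k // d k ≠ 0} * ∑ p : m × m, d p.1 * d p.2 * x p ^ 2 := by
  have hsupp : ∑ k, d k * x (k, k) = ∑ k with d k ≠ 0, d k * x (k, k) :=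
    (sum_filter_of_ne fun k _ h => left_ne_zero_of_mul h).symm
  have hdiag : ∑ k, (d k * x (k, k)) ^ 2 ≤ ∑ p : m × m, d p.1 * d p.2 * x p ^ 2 := by
    rw [Fintype.sum_prod_type]
    refine sum_le_sum fun k _ => ?_
    calc (d k * x (k, k)) ^ 2 = d k * d k * x (k, k) ^ 2 := by ring
      _ ≤ ∑ l, d k * d l * x (k, l) ^ 2 :=
        single_le_sum (f := fun l => d k * d l * x (k, l) ^ 2)
          (fun l _ => by have := hd k; have := hd l; positivity) (mem_univ k)
  calc (∑ k, d k * x (k, k)) ^ 2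
      ≤ (#{k | d k ≠ 0} : ℝ) * ∑ k with d k ≠ 0, (d k * x (k, k)) ^ 2 := by
        rw [hsupp]; exact sq_sum_le_card_mul_sum_sq
    _ ≤ (#{k | d k ≠ 0} : ℝ) * ∑ k, (d k * x (k, k)) ^ 2 := by
        gcongr
        exact filter_subset _ _
    _ ≤ (Fintype.card {k // d k ≠ 0} : ℝ) * ∑ p : m × m, d p.1 * d p.2 * x p ^ 2 := by
        rw [Fintype.card_subtype]
        gcongr

namespace Matrix

-- `vec Aᵀ = fun p => A p.1 p.2` stacks the rows of `A`.
def kronSubOuter (A : Matrix m m ℝ) (t : ℝ) : Matrix (m × m) (m × m) ℝ :=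
  t • (A ⊗ₖ A) - vecMulVec (vec Aᵀ) (vec Aᵀ)

theorem kronSubOuter_conj (U C : Matrix m m ℝ) (t : ℝ) :
    kronSubOuter (U * C * Uᵀ) t = (U ⊗ₖ U) * kronSubOuter C t * (U ⊗ₖ U)ᵀ := by
  have hvec : vec (U * C * Uᵀ)ᵀ = (U ⊗ₖ U) *ᵥ vec Cᵀ := by
    rw [kronecker_mulVec_vec, transpose_mul, transpose_mul, transpose_transpose, Matrix.mul_assoc]
  rw [kronSubOuter, kronSubOuter, hvec, mul_kronecker_mul, mul_kronecker_mul,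
    kroneckerMap_transpose, Matrix.mul_sub, Matrix.sub_mul, mul_smul_comm, smul_mul_assoc,
    mul_vecMulVec, vecMulVec_mul, vecMul_transpose]

theorem isHermitian_kronSubOuter {A : Matrix m m ℝ} (hA : A.IsHermitian) (t : ℝ) :
    (kronSubOuter A t).IsHermitian := by
  have hAA : (A ⊗ₖ A).IsHermitian := by
    rw [IsHermitian, conjTranspose_kronecker, hA.eq]
  simpa [kronSubOuter] using
    (hAA.smul (IsSelfAdjoint.all t)).sub (posSemidef_vecMulVec_self_star (vec Aᵀ)).isHermitian

variable [DecidableEq m]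

theorem posSemidef_kronSubOuter_conj_iff {U : Matrix m m ℝ} (hU : IsUnit U) (C : Matrix m m ℝ)
    (t : ℝ) : (kronSubOuter (U * C * Uᵀ) t).PosSemidef ↔ (kronSubOuter C t).PosSemidef := by
  have hUU : IsUnit (U ⊗ₖ U) := by
    rw [isUnit_iff_isUnit_det, det_kronecker]
    have := (isUnit_iff_isUnit_det U).mp hU
    exact (this.pow _).mul (this.pow _)
  rw [kronSubOuter_conj, ← conjTranspose_eq_transpose_of_trivial, ← star_eq_conjTranspose]
  exact hUU.posSemidef_star_right_conjugate_iff

theorem dotProduct_kronSubOuter_diagonal_mulVec (d : m → ℝ) (t : ℝ) (x : m × m → ℝ) :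
    x ⬝ᵥ kronSubOuter (diagonal d) t *ᵥ x
      = t * ∑ p : m × m, d p.1 * d p.2 * x p ^ 2 - (∑ k, d k * x (k, k)) ^ 2 := by
  have hvec : vec (diagonal d)ᵀ ⬝ᵥ x = ∑ k, d k * x (k, k) := by
    simp [dotProduct, Fintype.sum_prod_type, diagonal_apply]
  rw [kronSubOuter, sub_mulVec, dotProduct_sub, smul_mulVec, dotProduct_smul,
    diagonal_kronecker_diagonal, vecMulVec_mulVec, op_smul_eq_smul, dotProduct_smul,
    dotProduct_comm x (vec _), hvec, smul_eq_mul, smul_eq_mul, ← sq]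
  congr 2
  exact sum_congr rfl fun p _ => by rw [mulVec_diagonal]; ring

theorem posSemidef_kronSubOuter_diagonal_iff {d : m → ℝ} (hd : ∀ k, 0 ≤ d k) {t : ℝ}
    (ht : 0 ≤ t) :
    (kronSubOuter (diagonal d) t).PosSemidef ↔ (Fintype.card {k // d k ≠ 0} : ℝ) ≤ t := by
  set r : ℝ := (Fintype.card {k // d k ≠ 0} : ℝ)
  rw [posSemidef_iff_dotProduct_mulVec]
  simp only [star_trivial, dotProduct_kronSubOuter_diagonal_mulVec]
  constructor
  · rintro ⟨-, hq⟩
    -- since `0⁻¹ = 0`, `diagonal d⁻¹` is the pseudo-inverse of `diagonal d`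
    have hquad : ∑ p : m × m, d p.1 * d p.2 * vec (diagonal d⁻¹) p ^ 2 = r := by
      have hsq (k : m) : d k * d k * (d k)⁻¹ ^ 2 = d k * (d k)⁻¹ := by
        rw [sq, ← mul_assoc, mul_self_mul_inv]
      simp only [Fintype.sum_prod_type, vec, diagonal_apply, ite_pow, mul_ite, sum_ite_eq',
        mem_univ, if_true, ne_eq, OfNat.ofNat_ne_zero, not_false_eq_true, zero_pow, mul_zero,
        Pi.inv_apply, hsq]
      exact sum_mul_inv_self_eq_card d
    have htrace : ∑ k, d k * vec (diagonal d⁻¹) (k, k) = r := by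
      simp only [vec, diagonal_apply_eq, Pi.inv_apply]
      exact sum_mul_inv_self_eq_card d
    have h := hq (vec (diagonal d⁻¹))
    rw [hquad, htrace] at h
    rcases (Nat.cast_nonneg _ : 0 ≤ r).eq_or_lt with hr | hr
    · linarith
    · nlinarith
  · intro hr
    refine ⟨isHermitian_kronSubOuter (isHermitian_diagonal d) t, fun x => ?_⟩
    have hcs := sq_sum_mul_le_card_mul_sum hd x
    have hnonneg : 0 ≤ ∑ p : m × m, d p.1 * d p.2 * x p ^ 2 :=
      sum_nonneg fun p _ => by have := hd p.1; have := hd p.2; positivity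
    nlinarith

theorem posSemidef_kronSubOuter_iff {A : Matrix m m ℝ} (hA : A.PosSemidef) {t : ℝ} (ht : 0 ≤ t) :
    (kronSubOuter A t).PosSemidef ↔ (A.rank : ℝ) ≤ t := by
  set U : Matrix m m ℝ := (hA.isHermitian.eigenvectorUnitary : Matrix m m ℝ)
  have hspec : A = U * diagonal hA.isHermitian.eigenvalues * Uᵀ := by
    conv_lhs => rw [hA.isHermitian.spectral_theorem]
    simp [U, Unitary.conjStarAlgAut_apply, RCLike.ofReal_real_eq_id, star_eq_conjTranspose]
  rw [hA.isHermitian.rank_eq_card_non_zero_eigs,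
    ← posSemidef_kronSubOuter_diagonal_iff hA.eigenvalues_nonneg ht,
    ← posSemidef_kronSubOuter_conj_iff (U := U) Unitary.isUnit_coe (diagonal _), ← hspec]

end Matrix

/-- for an `n×n` real positive semidefinite matrix `A`,
`rank(A) = min { t ≥ 0 : vec(A)vec(A)ᵀ ⪯ t·(A ⊗ A) }`. -/
theorem stmt17 {n : ℕ} (A : Matrix (Fin n) (Fin n) ℝ) (hA : A.PosSemidef) :
    (A.rank : ℝ) = sInf {t : ℝ | 0 ≤ t ∧
      (t • (A ⊗ₖ A) -
        Matrix.vecMulVec (fun p : Fin n × Fin n => A p.1 p.2)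
          (fun p : Fin n × Fin n => A p.1 p.2)).PosSemidef} := by
  have hset : {t : ℝ | 0 ≤ t ∧ (kronSubOuter A t).PosSemidef} = Set.Ici (A.rank : ℝ) := by
    ext t
    refine ⟨fun ⟨ht, h⟩ => (posSemidef_kronSubOuter_iff hA ht).mp h, fun h => ?_⟩
    have ht : 0 ≤ t := (Nat.cast_nonneg _).trans h
    exact ⟨ht, (posSemidef_kronSubOuter_iff hA ht).mpr h⟩
  change _ = sInf {t : ℝ | 0 ≤ t ∧ (kronSubOuter A t).PosSemidef}
  rw [hset, csInf_Ici]
end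

section
/- Let A be an n×n real symmetric positive semidefinite matrix, let t ≥ 0, and let X be a symmetric n²×n² real matrix such that t·X − vec(A)vec(A)^T is positive semidefinite and (A ⊗ A) − X is positive semidefinite. Then rank(A) ≤ t. (In particular, the semidefinite programming relaxation τ_cp^sos(A) of the cp-rank satisfies τ_cp^sos(A) ≥ rank(A) for every completely positive matrix A.) -/
/-!
Let `B` be the Moore–Penrose inverse of `A`, obtained from the functional calculus as
`cfc (·⁻¹) A`, and test both semidefinite constraints against `v = vec B`. Since `ABA = A`
and `B` is symmetric, `vec A ⬝ v = tr(AB) = rank A` and `vᵀ (A ⊗ A) v = tr(BABA) = rank A`.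
Writing `r = rank A`, the first constraint gives `r² ≤ t · vᵀXv` and the second `vᵀXv ≤ r`,
so `r² ≤ t r`, whence `r ≤ t`.
-/

open Matrix Kronecker

namespace Matrix.IsHermitian

variable {n 𝕜 : Type*} [Fintype n] [DecidableEq n] [RCLike 𝕜] {A : Matrix n n 𝕜}

lemma trace_cfc (hA : A.IsHermitian) (f : ℝ → ℝ) :
    (cfc f A).trace = ∑ i, (f (hA.eigenvalues i) : 𝕜) := by
  rw [hA.cfc_eq, IsHermitian.cfc, Unitary.conjStarAlgAut_apply, trace_mul_cycle,
    Unitary.coe_star_mul_self, one_mul, trace_diagonal]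
  rfl

lemma mul_cfc_inv_mul_self (hA : A.IsHermitian) : A * cfc (·⁻¹ : ℝ → ℝ) A * A = A := by
  have hinv : ContinuousOn (·⁻¹ : ℝ → ℝ) (spectrum ℝ A) := A.finite_real_spectrum.continuousOn _
  calc A * cfc (·⁻¹ : ℝ → ℝ) A * A = cfc (fun x : ℝ ↦ x * x⁻¹ * x) A := by
        rw [cfc_mul _ _ A, cfc_mul _ _ A, cfc_id' ℝ A]
    _ = A := by
        rw [cfc_congr (g := id) (fun x _ ↦ mul_inv_mul_cancel x), cfc_id ℝ A]

lemma trace_mul_cfc_inv (hA : A.IsHermitian) : (A * cfc (·⁻¹ : ℝ → ℝ) A).trace = A.rank := by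
  have hinv : ContinuousOn (·⁻¹ : ℝ → ℝ) (spectrum ℝ A) := A.finite_real_spectrum.continuousOn _
  nth_rw 1 [← cfc_id' ℝ A]
  rw [← cfc_mul _ _ A, hA.trace_cfc, hA.rank_eq_card_non_zero_eigs, Fintype.card_subtype,
    Finset.card_filter]
  push_cast
  refine Finset.sum_congr rfl fun i _ ↦ ?_
  by_cases h : hA.eigenvalues i = 0 <;> simp [h]

end Matrix.IsHermitian

theorem Matrix.vec_dotProduct_kronecker_mulVec_vec {m R : Type*} [Fintype m] [CommSemiring R]
    (A B : Matrix m m R) :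
    vec B ⬝ᵥ (A ⊗ₖ A) *ᵥ vec B = (Bᵀ * A * B * Aᵀ).trace := by
  rw [kronecker_mulVec_vec, vec_dotProduct_vec, Matrix.mul_assoc, Matrix.mul_assoc,
    Matrix.mul_assoc]

theorem Matrix.dotProduct_le_of_posSemidef_sandwich {ι : Type*} [Fintype ι]
    {a v : ι → ℝ} {M X : Matrix ι ι ℝ} {t : ℝ} (ht : 0 ≤ t)
    (hX : (t • X - vecMulVec a a).PosSemidef) (hM : (M - X).PosSemidef)
    (hv : v ⬝ᵥ M *ᵥ v = a ⬝ᵥ v) : a ⬝ᵥ v ≤ t := by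
  set r := a ⬝ᵥ v
  have hlower : r * r ≤ t * (v ⬝ᵥ X *ᵥ v) := by
    have := hX.dotProduct_mulVec_nonneg v
    simp only [star_trivial, sub_mulVec, dotProduct_sub, smul_mulVec, dotProduct_smul,
      vecMulVec_mulVec, dotProduct_comm v a, op_smul_eq_mul, smul_eq_mul] at this
    linarith
  have hupper : v ⬝ᵥ X *ᵥ v ≤ r := by
    have := hM.dotProduct_mulVec_nonneg v
    rw [star_trivial, sub_mulVec, dotProduct_sub, hv] at this
    linarith
  rcases le_or_gt r 0 with hr | hr
  · linarith
  · nlinarith [mul_le_mul_of_nonneg_left hupper ht]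

theorem stmt18_general {n : ℕ} (A : Matrix (Fin n) (Fin n) ℝ) (hA : A.PosSemidef)
    (t : ℝ) (ht : 0 ≤ t) (X : Matrix (Fin n × Fin n) (Fin n × Fin n) ℝ)
    (h1 : (t • X -
      Matrix.vecMulVec (fun p : Fin n × Fin n => A p.1 p.2)
        (fun p : Fin n × Fin n => A p.1 p.2)).PosSemidef)
    (h2 : ((A ⊗ₖ A) - X).PosSemidef) :
    (A.rank : ℝ) ≤ t := by
  have hAt : Aᵀ = A := hA.1
  set B := cfc (·⁻¹ : ℝ → ℝ) A
  have hBt : Bᵀ = B := (cfc_predicate _ A : B.IsHermitian)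
  have hABA : A * B * A = A := hA.1.mul_cfc_inv_mul_self
  have hvecA : (fun p : Fin n × Fin n => A p.1 p.2) = vec A := congrArg vec hAt
  rw [hvecA] at h1
  have hrank : vec A ⬝ᵥ vec B = A.rank := by
    rw [vec_dotProduct_vec, hAt, hA.1.trace_mul_cfc_inv]
  have hquad : vec B ⬝ᵥ (A ⊗ₖ A) *ᵥ vec B = vec A ⬝ᵥ vec B := by
    rw [vec_dotProduct_kronecker_mulVec_vec, hBt, hAt, vec_dotProduct_vec, hAt,
      Matrix.mul_assoc B A B, Matrix.mul_assoc B, hABA, trace_mul_comm]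
  exact hrank ▸ dotProduct_le_of_posSemidef_sandwich ht h1 h2 hquad

/-- if `A` is `n×n` positive semidefinite, `t ≥ 0`, and `X` is a
symmetric `n²×n²` matrix with `vec(A)vec(A)ᵀ ⪯ t·X` and `X ⪯ A ⊗ A`, then
`rank(A) ≤ t` (so the SDP relaxation `τ_cp^sos(A)` is at least `rank(A)`). -/
theorem stmt18 {n : ℕ} (A : Matrix (Fin n) (Fin n) ℝ) (hA : A.PosSemidef)
    (t : ℝ) (ht : 0 ≤ t) (X : Matrix (Fin n × Fin n) (Fin n × Fin n) ℝ)
    (hXsymm : X.IsSymm)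
    (h1 : (t • X -
      Matrix.vecMulVec (fun p : Fin n × Fin n => A p.1 p.2)
        (fun p : Fin n × Fin n => A p.1 p.2)).PosSemidef)
    (h2 : ((A ⊗ₖ A) - X).PosSemidef) :
    (A.rank : ℝ) ≤ t :=
  stmt18_general A hA t ht X h1 h2
end

section
/- Let A be an n×n completely positive matrix. Then τ_cp(A) is at least the fractional edge-clique cover number of the graph G(A): τ_cp(A) ≥ c_frac(G(A)). -/
open Matrix

/-- The set of atoms `𝒜_cp(A)`: rank-at-most-one matrices `R` with `0 ≤ R ≤ A`
entrywise and `0 ⪯ R ⪯ A` in the Loewner order. -/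
noncomputable def Acp {n : ℕ} (A : Matrix (Fin n) (Fin n) ℝ) :
    Set (Matrix (Fin n) (Fin n) ℝ) :=
  {R | R.rank ≤ 1 ∧ (∀ i j, 0 ≤ R i j ∧ R i j ≤ A i j) ∧
    R.PosSemidef ∧ (A - R).PosSemidef}

/-- `τ_cp(A)`: supremum of `L(A)` over linear functionals `L` with `L ≤ 1` on `𝒜_cp(A)`. -/
noncomputable def tauCp {n : ℕ} (A : Matrix (Fin n) (Fin n) ℝ) : ℝ :=
  sSup {x | ∃ L : Matrix (Fin n) (Fin n) ℝ →ₗ[ℝ] ℝ, (∀ R ∈ Acp A, L R ≤ 1) ∧ L A = x}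

/-!
By LP duality, if every fractional edge-clique cover of `G(A)` has weight `> c`, there are
edge weights `z ≥ 0` of total weight `> c` putting weight `≤ 1` on every clique; they come from
separating the convex hull of `0` and the clique incidence vectors from the orthant above the
edge indicator scaled by `1 / c`. The functional
`X ↦ ∑ z_ij X_ij / A_ij` takes the value `∑ z` at `A` and is at most `1` on every atom `R`:
since `R` is nonnegative, positive semidefinite and of rank one, `R_ij² = R_ii R_jj`, so the
indices with `R_ii ≠ 0` form a clique of `G(A)` that carries every nonzero entry of `R`, and
`R_ij ≤ A_ij` there. Hence `τ_cp(A) > c`.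
-/

theorem Matrix.apply_mul_apply_eq_of_rank_le_one {m n K : Type*} [Fintype n] [Field K]
    {R : Matrix m n K} (hR : R.rank ≤ 1) (i j : m) (k l : n) :
    R i k * R j l = R i l * R j k := by
  classical
  obtain ⟨v, hv⟩ := finrank_le_one_iff.mp hR
  have hcol : ∀ k, ∃ c : K, R.col k = c • (v : m → K) := fun k => by
    obtain ⟨c, hc⟩ := hv ⟨R *ᵥ Pi.single k 1, Pi.single k 1, rfl⟩
    exact ⟨c, by rw [← mulVec_single_one]; exact congrArg Subtype.val hc.symm⟩
  choose c hc using hcol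
  have hR : ∀ i k, R i k = c k * v.1 i := fun i k => congrFun (hc k) i
  simp only [hR]
  ring

theorem exists_packing_of_forall_cover_gt {ι κ : Type*} [Fintype ι] [Fintype κ]
    (u : κ → ι → ℝ) (b : ι → ℝ) {t : ℝ} (ht : 0 < t)
    (h : ∀ x : κ → ℝ, 0 ≤ x → b ≤ ∑ k, x k • u k → t < ∑ k, x k) :
    ∃ y : ι → ℝ, 0 ≤ y ∧ (∀ k, y ⬝ᵥ u k < 1) ∧ t < y ⬝ᵥ b := by
  classical
  -- The coordinate `none` stands for the origin: `M '' stdSimplex` is the hull of `0` and the `u k`.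
  let M : (Option κ → ℝ) →ₗ[ℝ] ι → ℝ :=
    Fintype.linearCombination ℝ u ∘ₗ LinearMap.funLeft ℝ ℝ some
  have hM : ∀ μ, M μ = ∑ k, μ (some k) • u k := fun μ => by
    simp [M, Fintype.linearCombination_apply, LinearMap.funLeft_apply]
  have hdisj : Disjoint (M '' stdSimplex ℝ (Option κ)) (Set.Ici (t⁻¹ • b)) := by
    refine Set.disjoint_left.2 ?_
    rintro _ ⟨μ, hμ, rfl⟩ (hb : t⁻¹ • b ≤ M μ)
    have hsum : ∑ k, μ (some k) ≤ 1 := by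
      rw [← hμ.2, Fintype.sum_option]; linarith [hμ.1 none]
    have hcover : b ≤ ∑ k, (t * μ (some k)) • u k :=
      calc b = t • t⁻¹ • b := (smul_inv_smul₀ ht.ne' b).symm
        _ ≤ t • M μ := smul_le_smul_of_nonneg_left hb ht.le
        _ = _ := by simp [hM, Finset.smul_sum, smul_smul]
    have := h _ (fun k => mul_nonneg ht.le (hμ.1 _)) hcover
    rw [← Finset.mul_sum] at this
    nlinarith
  obtain ⟨f, s₁, s₂, hf₁, hs, hf₂⟩ := geometric_hahn_banach_compact_closed
    ((convex_stdSimplex ℝ _).linear_image M)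
    ((isCompact_stdSimplex _ _).image M.continuous_of_finiteDimensional)
    (convex_Ici _) isClosed_Ici hdisj
  set w : ι → ℝ := fun i => f (Pi.single i 1)
  have hf : ∀ v, f v = w ⬝ᵥ v := fun v => by
    conv_lhs => rw [← Finset.univ_sum_single v]
    rw [map_sum]
    refine Finset.sum_congr rfl fun i _ => ?_
    have : Pi.single i (v i) = v i • (Pi.single i 1 : ι → ℝ) := by ext j; simp [Pi.single_apply]
    rw [this, map_smul, smul_eq_mul, mul_comm]
  have hs₁ : 0 < s₁ := by
    simpa [hM] using hf₁ _ ⟨_, single_mem_stdSimplex ℝ none, rfl⟩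
  have hb : s₂ < t⁻¹ * (w ⬝ᵥ b) := by
    simpa [hf, dotProduct_smul] using hf₂ (t⁻¹ • b) Set.self_mem_Ici
  -- `f > s₂` on the whole orthant `Ici (t⁻¹ • b)`, so no coordinate of `f` can be negative.
  have hw : 0 ≤ w := fun i => by
    by_contra! hwi
    set r := (t⁻¹ * (w ⬝ᵥ b) - s₂) / -w i
    have hr : r * w i = s₂ - t⁻¹ * (w ⬝ᵥ b) := by
      rw [div_mul_eq_mul_div, div_eq_iff (neg_pos.2 hwi).ne']; ring
    have := hf₂ (t⁻¹ • b + r • Pi.single i 1) (Set.mem_Ici.2 <| le_add_of_nonneg_right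
      (smul_nonneg (div_nonneg (sub_nonneg.2 hb.le) (neg_nonneg.2 hwi.le))
        (Pi.single_nonneg.2 zero_le_one)))
    simp only [hf, dotProduct_add, dotProduct_smul, dotProduct_single, smul_eq_mul,
      mul_one] at this
    linarith
  refine ⟨s₁⁻¹ • w, smul_nonneg (inv_nonneg.2 hs₁.le) hw, fun k => ?_, ?_⟩
  · have := hf₁ (u k)
      ⟨Pi.single (some k) 1, single_mem_stdSimplex ℝ _, by simp [hM, Pi.single_apply]⟩
    rwa [smul_dotProduct, ← hf, smul_eq_mul, inv_mul_lt_one₀ hs₁]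
  · rw [smul_dotProduct, smul_eq_mul, lt_inv_mul_iff₀ hs₁]
    rw [lt_inv_mul_iff₀ ht] at hb
    nlinarith

noncomputable def edgeWeightFunctional {m : Type*} [Fintype m] (A : Matrix m m ℝ)
    (z : m × m → ℝ) : Matrix m m ℝ →ₗ[ℝ] ℝ :=
  ∑ p, (z p / A p.1 p.2) • entryLinearMap ℝ ℝ p.1 p.2

section edgeWeightFunctional

variable {m : Type*} [Fintype m] {A : Matrix m m ℝ} {z : m × m → ℝ}

theorem edgeWeightFunctional_apply (X : Matrix m m ℝ) :
    edgeWeightFunctional A z X = ∑ p, z p / A p.1 p.2 * X p.1 p.2 := by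
  simp [edgeWeightFunctional]

theorem edgeWeightFunctional_apply_self (hz : ∀ p, A p.1 p.2 = 0 → z p = 0) :
    edgeWeightFunctional A z A = ∑ p, z p := by
  rw [edgeWeightFunctional_apply]
  refine Finset.sum_congr rfl fun p _ => ?_
  by_cases hp : A p.1 p.2 = 0
  · simp [hp, hz p hp]
  · exact div_mul_cancel₀ _ hp

end edgeWeightFunctional

section CompletelyPositive

variable {n : ℕ} {A R : Matrix (Fin n) (Fin n) ℝ}

theorem vecMulVec_mem_Acp {r : ℕ} {a : Fin r → Fin n → ℝ} (ha : ∀ i k, 0 ≤ a i k)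
    (hA : A = ∑ i, vecMulVec (a i) (a i)) (i : Fin r) : vecMulVec (a i) (a i) ∈ Acp A := by
  have hpsd : ∀ m, (vecMulVec (a m) (a m)).PosSemidef := fun m => by
    simpa using posSemidef_vecMulVec_self_star (a m)
  refine ⟨rank_vecMulVec_le _ _, fun k l => ⟨mul_nonneg (ha i k) (ha i l), ?_⟩, hpsd i, ?_⟩
  · rw [hA, Matrix.sum_apply]
    exact Finset.single_le_sum (f := fun m => vecMulVec (a m) (a m) k l)
      (fun m _ => mul_nonneg (ha m k) (ha m l)) (Finset.mem_univ i)
  · rw [hA, ← Finset.sum_erase_add _ _ (Finset.mem_univ i), add_sub_cancel_right]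
    exact posSemidef_sum _ fun m _ => hpsd m

theorem le_tauCp {r : ℕ} {a : Fin r → Fin n → ℝ} (ha : ∀ i k, 0 ≤ a i k)
    (hA : A = ∑ i, vecMulVec (a i) (a i)) {L : Matrix (Fin n) (Fin n) ℝ →ₗ[ℝ] ℝ}
    (hL : ∀ R ∈ Acp A, L R ≤ 1) : L A ≤ tauCp A := by
  refine le_csSup ⟨r, ?_⟩ ⟨L, hL, rfl⟩
  rintro _ ⟨L', hL', rfl⟩
  calc L' A = ∑ i, L' (vecMulVec (a i) (a i)) := by rw [hA, map_sum]
    _ ≤ ∑ _i : Fin r, (1 : ℝ) := Finset.sum_le_sum fun i _ => hL' _ (vecMulVec_mem_Acp ha hA i)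
    _ = r := by simp

theorem mul_self_apply_eq_of_mem_Acp (hR : R ∈ Acp A) (i j : Fin n) :
    R i j * R i j = R i i * R j j := by
  have hsymm : R j i = R i j := by simpa using hR.2.2.1.1.apply i j
  rw [← apply_mul_apply_eq_of_rank_le_one hR.1 i j j i, hsymm]

theorem apply_eq_zero_of_mem_Acp (hR : R ∈ Acp A) {i j : Fin n} (h : R i i = 0 ∨ R j j = 0) :
    R i j = 0 := by
  apply mul_self_eq_zero.1
  rw [mul_self_apply_eq_of_mem_Acp hR]
  rcases h with h | h <;> simp [h]

theorem apply_pos_of_mem_Acp (hR : R ∈ Acp A) {i j : Fin n} (hi : R i i ≠ 0) (hj : R j j ≠ 0) :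
    0 < A i j := by
  have hRij : R i j ≠ 0 := fun h0 => by
    have := mul_self_apply_eq_of_mem_Acp hR i j
    simp [h0, hi, hj] at this
  exact ((hR.2.1 i j).1.lt_of_ne' hRij).trans_le (hR.2.1 i j).2

theorem edgeWeightFunctional_le_one_of_mem_Acp {z : Fin n × Fin n → ℝ} (hz : 0 ≤ z)
    (hcl : ∀ S : Finset (Fin n), (∀ i ∈ S, ∀ j ∈ S, 0 < A i j) → ∑ p ∈ S ×ˢ S, z p ≤ 1)
    (hR : R ∈ Acp A) : edgeWeightFunctional A z R ≤ 1 := by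
  set S := Finset.univ.filter fun i => R i i ≠ 0
  refine le_trans ?_ (hcl S fun i hi j hj => apply_pos_of_mem_Acp hR
    (Finset.mem_filter.1 hi).2 (Finset.mem_filter.1 hj).2)
  rw [edgeWeightFunctional_apply, ← Finset.sum_subset (Finset.subset_univ (S ×ˢ S))]
  · refine Finset.sum_le_sum fun p _ => ?_
    calc z p / A p.1 p.2 * R p.1 p.2 ≤ z p / A p.1 p.2 * A p.1 p.2 :=
          mul_le_mul_of_nonneg_left (hR.2.1 _ _).2
            (div_nonneg (hz p) ((hR.2.1 _ _).1.trans (hR.2.1 _ _).2))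
      _ ≤ z p := by
          rcases eq_or_ne (A p.1 p.2) 0 with h | h
          · simpa [h] using hz p
          · rw [div_mul_cancel₀ _ h]
  · intro p _ hp
    rw [apply_eq_zero_of_mem_Acp hR (or_iff_not_imp_left.2 (by simpa [S] using hp)), mul_zero]

theorem sum_le_tauCp {r : ℕ} {a : Fin r → Fin n → ℝ}
    (ha : ∀ i k, 0 ≤ a i k) (hA : A = ∑ i, vecMulVec (a i) (a i)) {z : Fin n × Fin n → ℝ}
    (hz : 0 ≤ z) (hzA : ∀ p, A p.1 p.2 = 0 → z p = 0)
    (hcl : ∀ S : Finset (Fin n), (∀ i ∈ S, ∀ j ∈ S, 0 < A i j) → ∑ p ∈ S ×ˢ S, z p ≤ 1) :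
    ∑ p, z p ≤ tauCp A := by
  rw [← edgeWeightFunctional_apply_self hzA]
  exact le_tauCp ha hA fun R => edgeWeightFunctional_le_one_of_mem_Acp hz hcl

noncomputable def fracEdgeCliqueCoverNumber (A : Matrix (Fin n) (Fin n) ℝ) : ℝ :=
  sInf {s : ℝ | ∃ x : Finset (Fin n) → ℝ,
      (∀ S, 0 ≤ x S) ∧
      (∀ S, x S ≠ 0 → ∀ i ∈ S, ∀ j ∈ S, 0 < A i j) ∧
      (∀ i j, i ≠ j → 0 < A i j →
        1 ≤ ∑ S : Finset (Fin n), if i ∈ S ∧ j ∈ S then x S else 0) ∧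
      s = ∑ S : Finset (Fin n), x S}

open Classical in
theorem fracEdgeCliqueCoverNumber_le_sum {x : Finset (Fin n) → ℝ} (hx : 0 ≤ x)
    (hcover : ∀ i j, i ≠ j → 0 < A i j → 1 ≤ ∑ S : Finset (Fin n),
      if (∀ i ∈ S, ∀ j ∈ S, 0 < A i j) ∧ i ∈ S ∧ j ∈ S then x S else 0) :
    fracEdgeCliqueCoverNumber A ≤ ∑ S, x S := by
  calc fracEdgeCliqueCoverNumber A ≤ ∑ S, if ∀ i ∈ S, ∀ j ∈ S, 0 < A i j then x S else 0 :=
        csInf_le ⟨0, ?_⟩ ⟨_, fun S => ?_, fun S hS => by_contra fun h => hS (if_neg h),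
          fun i j hij hAij => ?_, rfl⟩
    _ ≤ ∑ S, x S := Finset.sum_le_sum fun S _ => ?_
  · rintro _ ⟨x, hx, -, -, rfl⟩
    exact Finset.sum_nonneg fun S _ => hx S
  · split_ifs; exacts [hx S, le_rfl]
  · simpa [ite_and, and_comm] using hcover i j hij hAij
  · split_ifs; exacts [le_rfl, hx S]

end CompletelyPositive

/-- for a completely positive matrix `A`, `τ_cp(A)` is at least the
fractional edge-clique cover number of the graph `G(A)`: the infimum of the total
weight of nonnegative weights on cliques of `G(A)` fractionally covering its edges
is at most `τ_cp(A)`. -/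
theorem stmt19 {n : ℕ} (A : Matrix (Fin n) (Fin n) ℝ)
    (hcp : ∃ (r : ℕ) (a : Fin r → Fin n → ℝ), (∀ i k, 0 ≤ a i k) ∧
      A = ∑ i, Matrix.vecMulVec (a i) (a i)) :
    sInf {s : ℝ | ∃ x : Finset (Fin n) → ℝ,
      (∀ S, 0 ≤ x S) ∧
      (∀ S, x S ≠ 0 → ∀ i ∈ S, ∀ j ∈ S, 0 < A i j) ∧
      (∀ i j, i ≠ j → 0 < A i j →
        1 ≤ ∑ S : Finset (Fin n), if i ∈ S ∧ j ∈ S then x S else 0) ∧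
      s = ∑ S : Finset (Fin n), x S} ≤ tauCp A := by
  classical
  obtain ⟨r, a, ha, hA⟩ := hcp
  change fracEdgeCliqueCoverNumber A ≤ tauCp A
  refine le_of_forall_lt_imp_le_of_dense fun c hc => ?_
  rcases le_or_gt c 0 with hc0 | hc0
  · simpa using hc0.trans (le_tauCp ha hA (L := 0) (by simp))
  let clique (S : Finset (Fin n)) : Prop := ∀ i ∈ S, ∀ j ∈ S, 0 < A i j
  let edge (p : Fin n × Fin n) : Prop := p.1 ≠ p.2 ∧ 0 < A p.1 p.2
  let u (S : Finset (Fin n)) (p : Fin n × Fin n) : ℝ := if clique S ∧ p ∈ S ×ˢ S then 1 else 0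
  let b (p : Fin n × Fin n) : ℝ := if edge p then 1 else 0
  obtain ⟨y, hy, hyu, hyb⟩ := exists_packing_of_forall_cover_gt u b hc0 fun x hx hcover =>
    hc.trans_le <| fracEdgeCliqueCoverNumber_le_sum hx fun i j hij hAij => by
      simpa [u, b, edge, clique, hij, hAij, Finset.sum_apply] using hcover (i, j)
  let z (p : Fin n × Fin n) : ℝ := if edge p then y p else 0
  have hzy : z ≤ y := fun p => by unfold z; split_ifs; exacts [le_rfl, hy p]
  have hz : 0 ≤ z := fun p => by unfold z; split_ifs; exacts [hy p, le_rfl]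
  have hcl : ∀ S, clique S → ∑ p ∈ S ×ˢ S, z p ≤ 1 := fun S hS => by
    have := hyu S
    simp only [u, dotProduct, hS, true_and, mul_ite, mul_one, mul_zero, ← Finset.sum_filter,
      Finset.filter_mem_eq_inter, Finset.univ_inter] at this
    exact (Finset.sum_le_sum fun p _ => hzy p).trans this.le
  calc c ≤ ∑ p, z p := by simpa [b, dotProduct, z] using hyb.le
    _ ≤ tauCp A := sum_le_tauCp ha hA hz (fun p hp => if_neg fun he => he.2.ne' hp) hcl
end
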